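/- arXiv:1601.07281 — 2 statements merged into one kernel-verified Lean document; each statement's English description precedes it below -/
import Mathlib

section
/- Every order α digital (t,n,d)-net over 𝔽₂ is an order 1 digital (⌈t/α⌉, n, d)-net over 𝔽₂. -/
/-- Generating matrices `C_1, ..., C_d ∈ 𝔽₂^{q×n}` form an *order `α` digital
`(t,n,d)`-net over `𝔽₂`*: for every choice, for each `j`, of `ν_j` row indices
`i_{j,ν_j} < ⋯ < i_{j,1}` (encoded by a strictly decreasing `idx j : Fin (ν j) → Fin q`,
1-based row index being `idx j l + 1`) such that
`∑_j ∑_{l < min(ν_j, α)} i_{j,l} ≤ αn − t`, the selected rows are linearly independent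
over `𝔽₂`. -/
def isOrderNet (α t n q d : ℕ) (C : Fin d → Matrix (Fin q) (Fin n) (ZMod 2)) : Prop :=
  ∀ (ν : Fin d → ℕ) (idx : ∀ j : Fin d, Fin (ν j) → Fin q),
    (∀ j, StrictAnti (idx j)) →
    (∑ j, ∑ l : Fin (ν j), if (l : ℕ) < α then (idx j l : ℕ) + 1 else 0) ≤ α * n - t →
    LinearIndependent (ZMod 2) (fun p : (Σ j : Fin d, Fin (ν j)) => C p.1 (idx p.1 p.2))

/-!
Order `1` only weighs the largest selected row index `i_{j,1}` of each coordinate, while order `α`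
weighs at most `α` indices, each at most `i_{j,1}`. Hence the order-`α` weight is at most `α` times
the order-`1` weight, and an order-`1` weight bound `n - ⌈t/α⌉` becomes the order-`α` bound
`α (n - ⌈t/α⌉) ≤ α n - t`.
-/

open Finset

lemma Fin.sum_ite_val_lt_le_mul {m : ℕ} {f : Fin m → ℕ} (hf : Antitone f) (α : ℕ) :
    (∑ l : Fin m, if (l : ℕ) < α then f l else 0)
      ≤ α * ∑ l : Fin m, if (l : ℕ) < 1 then f l else 0 := by
  cases m with
  | zero => simp
  | succ m =>
    have hfirst : (∑ l : Fin (m + 1), if (l : ℕ) < 1 then f l else 0) = f 0 := by simp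
    calc (∑ l : Fin (m + 1), if (l : ℕ) < α then f l else 0)
        ≤ ∑ l ∈ range (m + 1), if l < α then f 0 else 0 := by
          rw [← Fin.sum_univ_eq_sum_range (fun l => if l < α then f 0 else 0)]
          gcongr with l
          split_ifs
          exacts [hf (Fin.zero_le l), le_rfl]
      _ = #((range (m + 1)).filter (· < α)) * f 0 := by
          rw [← sum_filter, Finset.sum_const, smul_eq_mul]
      _ ≤ #(range α) * f 0 := by
          gcongr
          intro l
          simp +contextual
      _ = α * ∑ l : Fin (m + 1), if (l : ℕ) < 1 then f l else 0 := by
          rw [card_range, hfirst]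

lemma Nat.mul_sub_ceilDiv_le (α n t : ℕ) : α * (n - t ⌈/⌉ α) ≤ α * n - t := by
  rcases Nat.eq_zero_or_pos α with rfl | hα
  · simp
  rw [Nat.mul_sub]
  exact Nat.sub_le_sub_left (le_smul_ceilDiv hα) _

theorem stmt4_general (α t n q d : ℕ)
    (C : Fin d → Matrix (Fin q) (Fin n) (ZMod 2)) (h : isOrderNet α t n q d C) :
    isOrderNet 1 ((t + α - 1) / α) n q d C := by
  intro ν idx hanti hweight
  refine h ν idx hanti ?_
  have hcoord (j : Fin d) := Fin.sum_ite_val_lt_le_mul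
    (f := fun l => (idx j l : ℕ) + 1) (fun _ _ hl => Nat.succ_le_succ ((hanti j).antitone hl)) α
  calc (∑ j, ∑ l : Fin (ν j), if (l : ℕ) < α then (idx j l : ℕ) + 1 else 0)
      ≤ α * ∑ j, ∑ l : Fin (ν j), if (l : ℕ) < 1 then (idx j l : ℕ) + 1 else 0 := by
        rw [mul_sum]
        exact sum_le_sum fun j _ => hcoord j
    _ ≤ α * (1 * n - (t + α - 1) / α) := Nat.mul_le_mul_left α hweight
    _ ≤ α * n - t := by
        rw [one_mul]
        exact Nat.mul_sub_ceilDiv_le α n t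

/-- Every order `α` digital `(t,n,d)`-net over `𝔽₂` is an order `1` digital
`(⌈t/α⌉, n, d)`-net over `𝔽₂` (here `⌈t/α⌉ = (t + α - 1)/α`). -/
theorem stmt4 (α t n q d : ℕ) (hα : 0 < α) (hq : α * n ≤ q) (ht : t ≤ α * n)
    (C : Fin d → Matrix (Fin q) (Fin n) (ZMod 2)) (h : isOrderNet α t n q d C) :
    isOrderNet 1 ((t + α - 1) / α) n q d C :=
  stmt4_general α t n q d C h
end

section
/- Let N ≥ 2 be an integer with binary expansion N = 2^{n_r} + ... + 2^{n_1}, n_r > ... > n_1 ≥ 0. Let S = (x_k)_{k≥0} be a digital sequence over 𝔽₂ with generating matrices C_1,...,C_d ∈ 𝔽₂^{ℕ×ℕ} satisfying c_{j,k,ℓ} = 0 for all k > 2ℓ. For μ ∈ {1,...,r}, the point set Q_μ = {x_k : 2^{n_1}+...+2^{n_{μ-1}} ≤ k < 2^{n_1}+...+2^{n_μ}} equals a digitally shifted digital net with 2^{n_μ} points whose generating matrices are the upper-left 2n_μ × n_μ submatrices of C_1,...,C_d, shifted by a fixed digital shift depending on μ. -/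
/-!
Write the block offset as `b = ∑_{i<μ} 2^{n_i}`. Since the `n_i` decrease, `2^{n_μ} ∣ b`, so for
`a < 2^{n_μ}` the binary digits of `b + a` are those of `b` plus those of `a`, with disjoint supports.
By linearity, `C_j (b + a)⃗ = C_j b⃗ + C_j a⃗`. The first summand is the shift, and it has finite
support because `C_j` vanishes below the band `k ≤ 2ℓ`. The same band condition shows that
`C_j a⃗` has nonzero entries only in rows `< 2n_μ` and uses only the first `n_μ` columns, i.e.
it equals `A_j a⃗`.
-/

/-- The `i`-th binary digit of `k` as an element of `𝔽₂`. -/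
def natDigit (k i : ℕ) : ZMod 2 := if k.testBit i then 1 else 0

/-- The `i`-th entry (0-based) of `C_j k⃗` over `𝔽₂`, where `k⃗` is the (finite) binary
digit vector of `k` and `Cj : ℕ → ℕ → ZMod 2` is an `ℕ×ℕ` matrix (row, column, 0-based). -/
def rowVal (Cj : ℕ → ℕ → ZMod 2) (k i : ℕ) : ZMod 2 :=
  ∑ ℓ ∈ Finset.range (k + 1), Cj i ℓ * natDigit k ℓ

/-- The coordinate of the `k`-th point of the digital sequence generated by `Cj`:
`x_{j,k} = ∑_{i≥0} y_i 2^{-(i+1)}` where `y = Cj k⃗` over `𝔽₂`. -/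
noncomputable def seqCoord (Cj : ℕ → ℕ → ZMod 2) (k : ℕ) : ℝ :=
  ∑' i : ℕ, ((rowVal Cj k i).val : ℝ) * ((1 : ℝ) / 2) ^ (i + 1)

open Finset

lemma natDigit_eq_zero_of_lt_two_pow {k ℓ : ℕ} (h : k < 2 ^ ℓ) : natDigit k ℓ = 0 := by
  simp [natDigit, Nat.testBit_lt_two_pow h]

lemma natDigit_add_of_two_pow_dvd {b a m : ℕ} (hb : 2 ^ m ∣ b) (ha : a < 2 ^ m) (ℓ : ℕ) :
    natDigit (b + a) ℓ = natDigit b ℓ + natDigit a ℓ := by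
  obtain ⟨q, rfl⟩ := hb
  have hq : (2 ^ m * q).testBit ℓ = if ℓ < m then (0 : ℕ).testBit ℓ else q.testBit (ℓ - m) := by
    simpa using Nat.testBit_two_pow_mul_add q (Nat.two_pow_pos m) ℓ
  by_cases hℓ : ℓ < m
  · simp [natDigit, Nat.testBit_two_pow_mul_add q ha, hq, hℓ]
  · have ha' : a < 2 ^ ℓ := ha.trans_le (Nat.pow_le_pow_right two_pos (not_lt.1 hℓ))
    simp [natDigit, Nat.testBit_two_pow_mul_add q ha, hq, hℓ, Nat.testBit_lt_two_pow ha']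

lemma sum_range_mul_natDigit_of_le {f : ℕ → ZMod 2} {k m n : ℕ} (hk : k < 2 ^ m) (hmn : m ≤ n) :
    ∑ ℓ ∈ range n, f ℓ * natDigit k ℓ = ∑ ℓ ∈ range m, f ℓ * natDigit k ℓ := by
  refine (sum_subset (range_subset_range.2 hmn) fun ℓ _ hℓ => ?_).symm
  have hkℓ : k < 2 ^ ℓ := hk.trans_le (Nat.pow_le_pow_right two_pos (by simpa using hℓ))
  simp [natDigit_eq_zero_of_lt_two_pow hkℓ]

section DigitalSequence

variable {Cj : ℕ → ℕ → ZMod 2}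

lemma rowVal_eq_sum_range {k n : ℕ} (hk : k < 2 ^ n) (i : ℕ) :
    rowVal Cj k i = ∑ ℓ ∈ range n, Cj i ℓ * natDigit k ℓ := by
  have hk' : k < 2 ^ (k + 1) := (Nat.lt_two_pow_self).trans (Nat.pow_lt_pow_succ one_lt_two)
  rw [rowVal, ← sum_range_mul_natDigit_of_le hk' (le_max_left _ n),
    sum_range_mul_natDigit_of_le hk (le_max_right _ n)]

lemma rowVal_add_of_two_pow_dvd {b a m : ℕ} (hb : 2 ^ m ∣ b) (ha : a < 2 ^ m) (i : ℕ) :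
    rowVal Cj (b + a) i = rowVal Cj b i + ∑ ℓ ∈ range m, Cj i ℓ * natDigit a ℓ := by
  set n := b + a + 1 + m
  have hlt : ∀ c, c ≤ b + a → c < 2 ^ n := fun c hc =>
    (Nat.lt_two_pow_self).trans_le (Nat.pow_le_pow_right two_pos (by omega))
  rw [rowVal_eq_sum_range (hlt _ le_rfl), rowVal_eq_sum_range (hlt b (by omega)),
    ← sum_range_mul_natDigit_of_le ha (by omega : m ≤ n)]
  simp only [natDigit_add_of_two_pow_dvd hb ha, mul_add, sum_add_distrib]

lemma sum_range_mul_eq_zero_of_band (hC : ∀ k ℓ, 2 * (ℓ + 1) < k + 1 → Cj k ℓ = 0)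
    {n i : ℕ} (hi : 2 * n ≤ i) (x : ℕ → ZMod 2) :
    ∑ ℓ ∈ range n, Cj i ℓ * x ℓ = 0 :=
  sum_eq_zero fun ℓ hℓ => by rw [hC i ℓ (by simp at hℓ; omega), zero_mul]

lemma rowVal_eq_zero_of_band (hC : ∀ k ℓ, 2 * (ℓ + 1) < k + 1 → Cj k ℓ = 0)
    {k i : ℕ} (hi : 2 * (k + 1) ≤ i) : rowVal Cj k i = 0 :=
  sum_range_mul_eq_zero_of_band hC hi _

end DigitalSequence

lemma two_pow_dvd_sum_filter_lt {r : ℕ} {nn : Fin r → ℕ} (hanti : StrictAnti nn)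
    (μ : Fin r) [DecidablePred fun i : Fin r => i < μ] :
    2 ^ nn μ ∣ ∑ i ∈ univ.filter fun i => i < μ, 2 ^ nn i :=
  dvd_sum fun _ hi => pow_dvd_pow 2 (hanti (mem_filter.1 hi).2).le

open Classical in
theorem stmt7_general (d r : ℕ) (nn : Fin r → ℕ) (hanti : StrictAnti nn)
    (C : Fin d → ℕ → ℕ → ZMod 2)
    (hC : ∀ (j : Fin d) (k ℓ : ℕ), 2 * (ℓ + 1) < k + 1 → C j k ℓ = 0)
    (μ : Fin r) :
    ∃ σ : Fin d → ℕ → ZMod 2,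
      (∀ j, ∃ M, ∀ i, M ≤ i → σ j i = 0) ∧
      ∀ a : ℕ, a < 2 ^ nn μ → ∀ j : Fin d,
        seqCoord (C j) ((∑ i ∈ Finset.univ.filter fun i => i < μ, 2 ^ nn i) + a) =
          ∑' i : ℕ,
            ((((if i < 2 * nn μ then
                  ∑ ℓ ∈ Finset.range (nn μ), C j i ℓ * natDigit a ℓ
                else 0) + σ j i).val : ℝ)) * ((1 : ℝ) / 2) ^ (i + 1) := by
  set b := ∑ i ∈ univ.filter fun i => i < μ, 2 ^ nn i
  refine ⟨fun j => rowVal (C j) b, fun j => ⟨2 * (b + 1), fun i => rowVal_eq_zero_of_band (hC j)⟩,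
    fun a ha j => tsum_congr fun i => ?_⟩
  rw [rowVal_add_of_two_pow_dvd (two_pow_dvd_sum_filter_lt hanti μ) ha, add_comm]
  split_ifs with hi
  · rfl
  · rw [sum_range_mul_eq_zero_of_band (hC j) (not_lt.1 hi)]

open Classical in
/-- Block decomposition of a digital sequence over `𝔽₂`.  Let `N = 2^{n_0} + ⋯ + 2^{n_{r-1}}`
with `n_0 > n_1 > ⋯ > n_{r-1} ≥ 0` (`nn` strictly decreasing), and let the generating
matrices `C_j` (0-based entries) satisfy `c_{j,k,ℓ} = 0` for `k > 2ℓ` (1-based), i.e.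
`C j k ℓ = 0` whenever `k + 1 > 2(ℓ + 1)`.  Then for each block index `μ`, the point set
`Q_μ = {x_k : ∑_{i<μ} 2^{n_i} ≤ k < ∑_{i≤μ} 2^{n_i}}` is a digitally shifted digital net:
there is a digital shift `σ` (finitely many nonzero entries in each coordinate) such that
for every `a < 2^{n_μ}`, the point `x_{offset + a}` has binary digits
`(A_j a⃗) + σ_j`, where `A_j` is the upper-left `2n_μ × n_μ` submatrix of `C_j`. -/
theorem stmt7 (d r : ℕ) (hr : 0 < r) (nn : Fin r → ℕ) (hanti : StrictAnti nn)
    (C : Fin d → ℕ → ℕ → ZMod 2)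
    (hC : ∀ (j : Fin d) (k ℓ : ℕ), 2 * (ℓ + 1) < k + 1 → C j k ℓ = 0)
    (μ : Fin r) :
    ∃ σ : Fin d → ℕ → ZMod 2,
      (∀ j, ∃ M, ∀ i, M ≤ i → σ j i = 0) ∧
      ∀ a : ℕ, a < 2 ^ nn μ → ∀ j : Fin d,
        seqCoord (C j) ((∑ i ∈ Finset.univ.filter fun i => i < μ, 2 ^ nn i) + a) =
          ∑' i : ℕ,
            ((((if i < 2 * nn μ then
                  ∑ ℓ ∈ Finset.range (nn μ), C j i ℓ * natDigit a ℓ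
                else 0) + σ j i).val : ℝ)) * ((1 : ℝ) / 2) ^ (i + 1) :=
  stmt7_general d r nn hanti C hC μ
end
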